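/- Let (O_k)_{k ∈ s} be a finite family of 2×2 complex matrices satisfying Σ_{k ∈ s} O_kᴴ · O_k = I, and set Ω = Σ_{k ∈ s} O_kᴴ · Z · O_k and γ = (1/2)·tr(Z · Ω). Then γ is a real number and γ ∈ [-1, 1]. -/
import Mathlib


open Matrix

noncomputable def pauliZ : Matrix (Fin 2) (Fin 2) ℂ := !![1, 0; 0, -1]

/-- For a Kraus family satisfying the completeness relation `Σ O_kᴴ O_k = I`, the
scaling constant `γ = (1/2)·tr(Z·Ω)` with `Ω = Σ O_kᴴ Z O_k` is a real number in
`[-1, 1]`. -/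
theorem gamma_real_mem_Icc {ι : Type*} (s : Finset ι)
    (O : ι → Matrix (Fin 2) (Fin 2) ℂ)
    (hO : ∑ k ∈ s, (O k)ᴴ * O k = (1 : Matrix (Fin 2) (Fin 2) ℂ)) :
    ∃ r : ℝ, (1 / 2 : ℂ) * (pauliZ * (∑ k ∈ s, (O k)ᴴ * pauliZ * O k)).trace = (r : ℂ) ∧
      r ∈ Set.Icc (-1 : ℝ) 1 := by
  have hZ00 : pauliZ 0 0 = 1 := rfl
  have hZ01 : pauliZ 0 1 = 0 := rfl
  have hZ10 : pauliZ 1 0 = 0 := rfl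
  have hZ11 : pauliZ 1 1 = -1 := rfl
  have h00 : ∑ k ∈ s, (Complex.normSq (O k 0 0) + Complex.normSq (O k 1 0)) = 1 := by
    have := congrFun (congrFun hO 0) 0
    simp only [Matrix.sum_apply, Matrix.mul_apply, Fin.sum_univ_two, Matrix.conjTranspose_apply,
      Matrix.one_apply, Complex.star_def, ← Complex.normSq_eq_conj_mul_self, if_pos rfl,
      if_true] at this
    exact_mod_cast this
  have h11 : ∑ k ∈ s, (Complex.normSq (O k 0 1) + Complex.normSq (O k 1 1)) = 1 := by
    have := congrFun (congrFun hO 1) 1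
    simp only [Matrix.sum_apply, Matrix.mul_apply, Fin.sum_univ_two, Matrix.conjTranspose_apply,
      Matrix.one_apply, Complex.star_def, ← Complex.normSq_eq_conj_mul_self, if_pos rfl,
      if_true] at this
    exact_mod_cast this
  set A : ℝ := ∑ k ∈ s, (Complex.normSq (O k 0 0) + Complex.normSq (O k 1 1)) with hA
  set B : ℝ := ∑ k ∈ s, (Complex.normSq (O k 1 0) + Complex.normSq (O k 0 1)) with hB'
  have hAnn : 0 ≤ A := Finset.sum_nonneg fun k _ =>
    add_nonneg (Complex.normSq_nonneg _) (Complex.normSq_nonneg _)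
  have hBnn : 0 ≤ B := Finset.sum_nonneg fun k _ =>
    add_nonneg (Complex.normSq_nonneg _) (Complex.normSq_nonneg _)
  have hsum : A + B = 2 := by
    rw [hA, hB', ← Finset.sum_add_distrib,
      show (∑ k ∈ s, ((Complex.normSq (O k 0 0) + Complex.normSq (O k 1 1)) +
          (Complex.normSq (O k 1 0) + Complex.normSq (O k 0 1))))
        = ∑ k ∈ s, ((Complex.normSq (O k 0 0) + Complex.normSq (O k 1 0)) +
          (Complex.normSq (O k 0 1) + Complex.normSq (O k 1 1)))
        from Finset.sum_congr rfl fun k _ => by ring,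
      Finset.sum_add_distrib, h00, h11]
    norm_num
  refine ⟨A - 1, ?_, by linarith, by linarith⟩
  have htr : (pauliZ * (∑ k ∈ s, (O k)ᴴ * pauliZ * O k)).trace
      = ∑ k ∈ s, ((Complex.normSq (O k 0 0) : ℂ) - Complex.normSq (O k 1 0)
          - Complex.normSq (O k 0 1) + Complex.normSq (O k 1 1)) := by
    rw [Matrix.mul_sum, Matrix.trace_sum]
    refine Finset.sum_congr rfl fun k _ => ?_
    simp only [Matrix.trace_fin_two, Matrix.mul_apply, Fin.sum_univ_two,
      Matrix.conjTranspose_apply, hZ00, hZ01, hZ10, hZ11, Complex.star_def,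
      Complex.normSq_eq_conj_mul_self]
    ring
  rw [htr]
  have e1 : (∑ k ∈ s, ((Complex.normSq (O k 0 0) : ℂ) - Complex.normSq (O k 1 0)
          - Complex.normSq (O k 0 1) + Complex.normSq (O k 1 1)))
      = ((A - B : ℝ) : ℂ) := by
    rw [hA, hB']
    push_cast
    rw [← Finset.sum_sub_distrib]
    exact Finset.sum_congr rfl fun k _ => by ring
  rw [e1, show A - B = 2 * (A - 1) by linarith]
  push_cast
  ring
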